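/- Let k be a field of characteristic zero, let A be a polynomial ring over k in finitely many variables, and let I and L be ideals of A such that both quotient rings A/I and A/L are smooth k-algebras. Then Q(L,I) and Q(I,L) are isomorphic as A-modules. -/

import Mathlib

open Submodule

variable (A : Type*) [CommRing A]

/-- The natural map `I/(I² + I·L) → (I+L)/(I² + L)` induced by the inclusion `I ⊆ I + L`. -/
noncomputable def qIota (L I : Ideal A) :
    (↥I ⧸ Submodule.comap I.subtype (I ^ 2 + I * L)) →ₗ[A]
      (↥(I + L) ⧸ Submodule.comap (I + L).subtype (I ^ 2 + L)) :=
  Submodule.liftQ _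
    ((Submodule.comap (I + L).subtype (I ^ 2 + L)).mkQ.comp
      (Submodule.inclusion (le_sup_left : I ≤ I + L)))
    (by
      intro x hx
      have hle : I ^ 2 + I * L ≤ I ^ 2 + L := by
        rw [Submodule.add_eq_sup, Submodule.add_eq_sup]
        exact sup_le_sup_left (Ideal.mul_le_inf.trans inf_le_right) _
      simp only [LinearMap.mem_ker, LinearMap.comp_apply, Submodule.mkQ_apply,
        Submodule.Quotient.mk_eq_zero, Submodule.mem_comap, Submodule.coe_subtype,
        Submodule.coe_inclusion]
      exact hle hx)

/-- The restriction map `Hom_A((I+L)/(I²+L), A/(I+L)) → Hom_A(I/(I²+I·L), A/(I+L))`. -/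
noncomputable def qRes (L I : Ideal A) :
    ((↥(I + L) ⧸ Submodule.comap (I + L).subtype (I ^ 2 + L)) →ₗ[A] A ⧸ (I + L)) →ₗ[A]
      ((↥I ⧸ Submodule.comap I.subtype (I ^ 2 + I * L)) →ₗ[A] A ⧸ (I + L)) :=
  LinearMap.lcomp A (A ⧸ (I + L)) (qIota A L I)

/-- The module `Q(L,I)`: the cokernel of the restriction map
`Hom_A((I+L)/(I²+L), A/(I+L)) → Hom_A(I/(I²+I·L), A/(I+L))`. -/
noncomputable abbrev Qmod (L I : Ideal A) :=
  ((↥I ⧸ Submodule.comap I.subtype (I ^ 2 + I * L)) →ₗ[A] A ⧸ (I + L)) ⧸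
    LinearMap.range (qRes A L I)

/-! ### Auxiliary definitions and lemmas -/

open TensorProduct KaehlerDifferential

universe u

/-- Any `A`-linear map from a formally smooth quotient's defining ideal into a module killed
by that ideal extends to a `k`-derivation of `A`. -/
lemma Dext {k A : Type u} [CommRing k] [CommRing A] [Algebra k A] [Algebra.FormallySmooth k A]
    (L : Ideal A) [Algebra.FormallySmooth k (A ⧸ L)]
    {M : Type*} [AddCommGroup M] [Module k M] [Module A M] [IsScalarTower k A M]
    (hM : ∀ x ∈ L, ∀ m : M, x • m = 0)
    (f : ↥L →ₗ[A] M) :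
    ∃ D : Derivation k A M, ∀ x (hx : x ∈ L), D x = f ⟨x, hx⟩ := by
  have hsurj : Function.Surjective (algebraMap A (A ⧸ L)) := Ideal.Quotient.mk_surjective
  have hK : RingHom.ker (algebraMap A (A ⧸ L)) = L := by
    rw [Ideal.Quotient.algebraMap_eq, Ideal.mk_ker]
  set K := RingHom.ker (algebraMap A (A ⧸ L)) with hKdef
  obtain ⟨l, hl⟩ := (Algebra.FormallySmooth.iff_split_injection (R := k) hsurj).mp inferInstance
  let f' : ↥K →ₗ[A] M := f ∘ₗ Submodule.inclusion hK.le
  have hvan : (K • (⊤ : Submodule A ↥K)) ≤ LinearMap.ker f' := by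
    intro v hv
    rw [LinearMap.mem_ker]
    refine Submodule.smul_induction_on hv (fun r hr n _ => ?_)
      (fun x y hx hy => by rw [map_add, hx, hy, add_zero])
    rw [map_smul]
    exact hM r (hK ▸ hr) _
  let fbar : K.Cotangent →ₗ[A] M := Submodule.liftQ _ f' hvan
  let j : Ω[A⁄k] →ₗ[A] (A ⧸ L) ⊗[A] Ω[A⁄k] := TensorProduct.mk A (A ⧸ L) (Ω[A⁄k]) 1
  refine ⟨((fbar ∘ₗ l) ∘ₗ j).compDer (KaehlerDifferential.D k A), fun x hx => ?_⟩
  have hxK : x ∈ K := hK.symm ▸ hx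
  have h1 : j (KaehlerDifferential.D k A x)
      = kerCotangentToTensor k A (A ⧸ L) (Ideal.toCotangent K ⟨x, hxK⟩) := rfl
  have h2 : (((fbar ∘ₗ l) ∘ₗ j).compDer (KaehlerDifferential.D k A)) x
      = fbar (l (j (KaehlerDifferential.D k A x))) := rfl
  have h3 := LinearMap.congr_fun hl (Ideal.toCotangent K ⟨x, hxK⟩)
  simp only [LinearMap.comp_apply, LinearMap.id_apply] at h3
  rw [h2, h1, h3]
  rfl

/-- The inclusion `I ⊓ L → I/(I² + I·L)`. -/
noncomputable def cIncl (L I : Ideal A) :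
    ↥(I ⊓ L) →ₗ[A] (↥I ⧸ Submodule.comap I.subtype (I ^ 2 + I * L)) :=
  (Submodule.comap I.subtype (I ^ 2 + I * L)).mkQ ∘ₗ Submodule.inclusion inf_le_left

/-- The restriction map `Hom(I/(I²+I·L), A/(I+L)) → Hom(I ⊓ L, A/(I+L))`. -/
noncomputable def rMap (L I : Ideal A) :
    ((↥I ⧸ Submodule.comap I.subtype (I ^ 2 + I * L)) →ₗ[A] A ⧸ (I + L)) →ₗ[A]
      (↥(I ⊓ L) →ₗ[A] A ⧸ (I + L)) :=
  LinearMap.lcomp A (A ⧸ (I + L)) (cIncl A L I)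

lemma qIota_mk (L I : Ideal A) (x : ↥I) :
    qIota A L I (Submodule.Quotient.mk x)
      = Submodule.Quotient.mk (Submodule.inclusion (le_sup_left : I ≤ I + L) x) := rfl

lemma smul_quot_zero (J : Ideal A) {j : A} (hj : j ∈ J) (m : A ⧸ J) : j • m = 0 := by
  obtain ⟨a, rfl⟩ := Submodule.Quotient.mk_surjective _ m
  rw [← Submodule.Quotient.mk_smul, Submodule.Quotient.mk_eq_zero, smul_eq_mul]
  exact Ideal.mul_mem_right a J hj

lemma qIota_surjective (L I : Ideal A) : Function.Surjective (qIota A L I) := by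
  intro y
  obtain ⟨w, rfl⟩ := Submodule.Quotient.mk_surjective _ y
  have hw : (w : A) ∈ I ⊔ L := by rw [← Submodule.add_eq_sup]; exact w.2
  obtain ⟨x, hx, z, hz, hxz⟩ := Submodule.mem_sup.mp hw
  refine ⟨Submodule.Quotient.mk ⟨x, hx⟩, ?_⟩
  rw [qIota_mk, Submodule.Quotient.eq]
  have : ((Submodule.inclusion (le_sup_left : I ≤ I + L) ⟨x, hx⟩ - w : ↥(I + L)) : A)
      = -z := by
    simp only [Submodule.coe_sub, Submodule.coe_inclusion, ← hxz]
    ring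
  rw [Submodule.mem_comap]
  show ((Submodule.inclusion (le_sup_left : I ≤ I + L) ⟨x, hx⟩ - w : ↥(I + L)) : A) ∈ I ^ 2 + L
  rw [this, Submodule.add_eq_sup]
  exact neg_mem (Submodule.mem_sup_right hz)

lemma range_qRes_eq_ker (L I : Ideal A) :
    LinearMap.range (qRes A L I) = LinearMap.ker (rMap A L I) := by
  apply le_antisymm
  · rintro _ ⟨ψ, rfl⟩
    rw [LinearMap.mem_ker]
    ext x
    show ψ (qIota A L I (cIncl A L I x)) = 0
    have h0 : qIota A L I (cIncl A L I x) = 0 := by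
      show qIota A L I (Submodule.Quotient.mk (Submodule.inclusion inf_le_left x)) = 0
      rw [qIota_mk, Submodule.Quotient.mk_eq_zero, Submodule.mem_comap]
      show ((Submodule.inclusion (le_sup_left : I ≤ I + L)
        (Submodule.inclusion inf_le_left x) : ↥(I + L)) : A) ∈ I ^ 2 + L
      rw [Submodule.add_eq_sup]
      exact Submodule.mem_sup_right x.2.2
    rw [h0, map_zero]
  · intro Φ hΦ
    rw [LinearMap.mem_ker] at hΦ
    have hker : LinearMap.ker (qIota A L I) ≤ LinearMap.ker Φ := by
      intro v hv
      obtain ⟨⟨x, hx⟩, rfl⟩ := Submodule.Quotient.mk_surjective _ v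
      rw [LinearMap.mem_ker] at hv ⊢
      rw [qIota_mk, Submodule.Quotient.mk_eq_zero, Submodule.mem_comap] at hv
      have hx2 : x ∈ I ^ 2 ⊔ L := by
        rw [← Submodule.add_eq_sup]; exact hv
      obtain ⟨a, ha, z, hz, hxz⟩ := Submodule.mem_sup.mp hx2
      have haI : a ∈ I := Ideal.pow_le_self two_ne_zero ha
      have hzI : z ∈ I := by
        have : z = x - a := by rw [← hxz]; ring
        rw [this]; exact sub_mem hx haI
      have hsplit : (⟨x, hx⟩ : ↥I) = ⟨a, haI⟩ + ⟨z, hzI⟩ := Subtype.ext (by simp [← hxz])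
      rw [hsplit, Submodule.Quotient.mk_add, map_add]
      have hmk0 : (Submodule.Quotient.mk (⟨a, haI⟩ : ↥I) :
          ↥I ⧸ Submodule.comap I.subtype (I ^ 2 + I * L)) = 0 := by
        rw [Submodule.Quotient.mk_eq_zero, Submodule.mem_comap]
        show a ∈ I ^ 2 + I * L
        rw [Submodule.add_eq_sup]
        exact Submodule.mem_sup_left ha
      have hz0 := LinearMap.congr_fun hΦ ⟨z, Submodule.mem_inf.mpr ⟨hzI, hz⟩⟩
      simp only [LinearMap.zero_apply] at hz0
      have : rMap A L I Φ ⟨z, Submodule.mem_inf.mpr ⟨hzI, hz⟩⟩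
          = Φ (Submodule.Quotient.mk ⟨z, hzI⟩) := rfl
      rw [this] at hz0
      rw [hmk0, map_zero, zero_add, hz0]
    refine ⟨(Submodule.liftQ _ Φ hker) ∘ₗ
      (LinearMap.quotKerEquivOfSurjective _ (qIota_surjective A L I)).symm.toLinearMap, ?_⟩
    refine LinearMap.ext fun v => ?_
    show (Submodule.liftQ _ Φ hker)
      ((LinearMap.quotKerEquivOfSurjective _ (qIota_surjective A L I)).symm
        (qIota A L I v)) = Φ v
    have he : (LinearMap.quotKerEquivOfSurjective _ (qIota_surjective A L I)).symm
        (qIota A L I v) = Submodule.Quotient.mk v := by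
      apply (LinearMap.quotKerEquivOfSurjective _ (qIota_surjective A L I)).injective
      rw [LinearEquiv.apply_symm_apply]
      rfl
    rw [he]
    rfl

/-- Vanishing of linear maps on products of ideals. -/
lemma vanish {M : Type*} [AddCommGroup M] [Module A M] (P Q : Ideal A)
    (hM : ∀ j ∈ Q, ∀ m : M, j • m = 0) (f : ↥P →ₗ[A] M) {x : A} (hx : x ∈ P * Q) :
    x ∈ P ∧ ∀ h : x ∈ P, f ⟨x, h⟩ = 0 := by
  refine Submodule.mul_induction_on hx (fun i hi j hj => ?_) (fun a b ha hb => ?_)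
  · refine ⟨Ideal.mul_mem_right _ _ hi, fun h => ?_⟩
    have : (⟨i * j, h⟩ : ↥P) = j • ⟨i, hi⟩ := Subtype.ext (by simp [mul_comm, smul_eq_mul])
    rw [this, map_smul]
    exact hM j hj _
  · obtain ⟨ha1, ha2⟩ := ha; obtain ⟨hb1, hb2⟩ := hb
    refine ⟨add_mem ha1 hb1, fun h => ?_⟩
    have : (⟨a + b, h⟩ : ↥P) = ⟨a, ha1⟩ + ⟨b, hb1⟩ := rfl
    rw [this, map_add, ha2 ha1, hb2 hb1, add_zero]

/-- Key extension lemma: a hom on the `I`-side restricts to the intersection and extends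
to the `L`-side, using formal smoothness of `A ⧸ I`. -/
lemma extendHom {k A : Type u} [CommRing k] [CommRing A] [Algebra k A]
    [Algebra.FormallySmooth k A] (I L : Ideal A) [Algebra.FormallySmooth k (A ⧸ I)]
    (Φ : (↥I ⧸ Submodule.comap I.subtype (I ^ 2 + I * L)) →ₗ[A] A ⧸ (I + L)) :
    ∃ Ψ : (↥L ⧸ Submodule.comap L.subtype (L ^ 2 + L * I)) →ₗ[A] A ⧸ (L + I),
      ∀ x (hxI : x ∈ I) (hxL : x ∈ L),
        Ψ (Submodule.Quotient.mk ⟨x, hxL⟩)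
          = Submodule.quotEquivOfEq (I + L) (L + I) (add_comm I L)
              (Φ (Submodule.Quotient.mk ⟨x, hxI⟩)) := by
  have hIle : I ≤ I + L := by rw [Submodule.add_eq_sup]; exact le_sup_left
  have hLle : L ≤ I + L := by rw [Submodule.add_eq_sup]; exact le_sup_right
  obtain ⟨D, hD⟩ := Dext (k := k) I (M := A ⧸ (I + L))
    (fun x hx m => smul_quot_zero A (I + L) (hIle hx) m)
    (Φ ∘ₗ (Submodule.comap I.subtype (I ^ 2 + I * L)).mkQ)
  let g0 : ↥L →ₗ[A] A ⧸ (I + L) :=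
    { toFun := fun l => D l.1
      map_add' := fun a b => by simp
      map_smul' := fun a l => by
        simp only [Submodule.coe_smul, smul_eq_mul, RingHom.id_apply]
        rw [Derivation.leibniz]
        rw [smul_quot_zero A (I + L) (hLle l.2) (D a), add_zero] }
  let g1 : ↥L →ₗ[A] A ⧸ (L + I) :=
    (Submodule.quotEquivOfEq (I + L) (L + I) (add_comm I L)).toLinearMap ∘ₗ g0
  have hvan : Submodule.comap L.subtype (L ^ 2 + L * I) ≤ LinearMap.ker g1 := by
    intro v hv
    rw [Submodule.mem_comap] at hv
    have hv' : (v : A) ∈ L * (L + I) := by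
      rw [mul_add, ← pow_two]; exact hv
    have := (vanish A L (L + I) (fun j hj m => smul_quot_zero A (L + I) hj m) g1 hv').2 v.2
    rw [LinearMap.mem_ker]
    exact this
  refine ⟨Submodule.liftQ _ g1 hvan, fun x hxI hxL => ?_⟩
  have h1 : Submodule.liftQ _ g1 hvan (Submodule.Quotient.mk ⟨x, hxL⟩)
      = g1 ⟨x, hxL⟩ := rfl
  rw [h1]
  show (Submodule.quotEquivOfEq (I + L) (L + I) (add_comm I L)) (D x) = _
  rw [hD x hxI]
  rfl

/-- The ranges of the two restriction maps coincide (up to the canonical identifications). -/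
lemma range_rMap_eq {k A : Type u} [CommRing k] [CommRing A] [Algebra k A]
    [Algebra.FormallySmooth k A] (I L : Ideal A)
    [Algebra.FormallySmooth k (A ⧸ I)] [Algebra.FormallySmooth k (A ⧸ L)] :
    LinearMap.range (rMap A L I) =
      Submodule.map (LinearEquiv.arrowCongr
          (LinearEquiv.ofEq (L ⊓ I) (I ⊓ L) (inf_comm L I))
          (Submodule.quotEquivOfEq (L + I) (I + L) (add_comm L I))).toLinearMap
        (LinearMap.range (rMap A I L)) := by
  apply le_antisymm
  · rintro _ ⟨Φ, rfl⟩
    obtain ⟨Ψ, hΨ⟩ := extendHom (k := k) I L Φ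
    refine ⟨rMap A I L Ψ, ⟨Ψ, rfl⟩, ?_⟩
    ext x
    have hx1 : (x : A) ∈ I := x.2.1
    have hx2 : (x : A) ∈ L := x.2.2
    show (Submodule.quotEquivOfEq (L + I) (I + L) (add_comm L I))
        (Ψ (cIncl A I L ((LinearEquiv.ofEq (L ⊓ I) (I ⊓ L) (inf_comm L I)).symm x)))
      = Φ (cIncl A L I x)
    have hc : cIncl A I L ((LinearEquiv.ofEq (L ⊓ I) (I ⊓ L) (inf_comm L I)).symm x)
        = Submodule.Quotient.mk ⟨(x : A), hx2⟩ := by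
      show (Submodule.comap L.subtype (L ^ 2 + L * I)).mkQ
        (Submodule.inclusion inf_le_left
          ((LinearEquiv.ofEq (L ⊓ I) (I ⊓ L) (inf_comm L I)).symm x)) = _
      exact congr_arg _ (Subtype.ext rfl)
    have hc2 : cIncl A L I x = Submodule.Quotient.mk ⟨(x : A), hx1⟩ := by
      apply congr_arg
      exact Subtype.ext rfl
    rw [hc, hc2, hΨ x hx1 hx2]
    obtain ⟨a, ha⟩ := Submodule.Quotient.mk_surjective _
      (Φ (Submodule.Quotient.mk ⟨(x : A), hx1⟩))
    rw [← ha, Submodule.quotEquivOfEq_mk, Submodule.quotEquivOfEq_mk]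
  · rintro _ ⟨_, ⟨Ψ, rfl⟩, rfl⟩
    obtain ⟨Φ, hΦ⟩ := extendHom (k := k) L I Ψ
    refine ⟨Φ, ?_⟩
    ext x
    have hx1 : (x : A) ∈ I := x.2.1
    have hx2 : (x : A) ∈ L := x.2.2
    show Φ (cIncl A L I x)
      = (Submodule.quotEquivOfEq (L + I) (I + L) (add_comm L I))
        (Ψ (cIncl A I L ((LinearEquiv.ofEq (L ⊓ I) (I ⊓ L) (inf_comm L I)).symm x)))
    have hc : cIncl A I L ((LinearEquiv.ofEq (L ⊓ I) (I ⊓ L) (inf_comm L I)).symm x)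
        = Submodule.Quotient.mk ⟨(x : A), hx2⟩ := by
      show (Submodule.comap L.subtype (L ^ 2 + L * I)).mkQ
        (Submodule.inclusion inf_le_left
          ((LinearEquiv.ofEq (L ⊓ I) (I ⊓ L) (inf_comm L I)).symm x)) = _
      exact congr_arg _ (Subtype.ext rfl)
    have hc2 : cIncl A L I x = Submodule.Quotient.mk ⟨(x : A), hx1⟩ := by
      apply congr_arg
      exact Subtype.ext rfl
    rw [hc, hc2, hΦ x hx2 hx1]
set_option maxHeartbeats 1000000 in
/-- Let `k` be a field of characteristic zero, `A` a polynomial ring over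
`k` in finitely many variables, and `I`, `L` ideals of `A` such that `A/I` and `A/L` are
smooth `k`-algebras. Then `Q(L,I) ≅ Q(I,L)` as `A`-modules. -/
theorem fibers_stmt5 {k : Type*} [Field k] [CharZero k] (n : ℕ)
    (I L : Ideal (MvPolynomial (Fin n) k))
    (hI : Algebra.Smooth k (MvPolynomial (Fin n) k ⧸ I))
    (hL : Algebra.Smooth k (MvPolynomial (Fin n) k ⧸ L)) :
    Nonempty
      ((Qmod (MvPolynomial (Fin n) k) L I) ≃ₗ[MvPolynomial (Fin n) k]
        (Qmod (MvPolynomial (Fin n) k) I L)) := by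
  set A := MvPolynomial (Fin n) k with hA
  haveI := hI.formallySmooth
  haveI := hL.formallySmooth
  haveI : Algebra.FormallySmooth k A :=
    Algebra.FormallySmooth.of_equiv
      (A := MvPolynomial (ULift.{0} (Fin n)) k)
      (MvPolynomial.renameEquiv k Equiv.ulift)
  have e1 : Qmod A L I ≃ₗ[A] ↥(LinearMap.range (rMap A L I)) :=
    (Submodule.quotEquivOfEq _ _ (range_qRes_eq_ker A L I)).trans
      (LinearMap.quotKerEquivRange (rMap A L I))
  have e2 : Qmod A I L ≃ₗ[A] ↥(LinearMap.range (rMap A I L)) :=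
    (Submodule.quotEquivOfEq _ _ (range_qRes_eq_ker A I L)).trans
      (LinearMap.quotKerEquivRange (rMap A I L))
  have heq := range_rMap_eq (k := k) I L
  exact ⟨e1.trans ((LinearEquiv.ofEq _ _ heq).trans
    (((LinearEquiv.arrowCongr
        (LinearEquiv.ofEq (L ⊓ I) (I ⊓ L) (inf_comm L I))
        (Submodule.quotEquivOfEq (L + I) (I + L) (add_comm L I))).submoduleMap
      (LinearMap.range (rMap A I L))).symm.trans e2.symm))⟩
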